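/- arXiv:1607.07003 — 3 statements merged into one kernel-verified Lean document; each statement's English description precedes it below -/
import Mathlib

section
/- Let d ≥ 1, m = 2^d, and let p̃ be the probability vector on {0,1}^d with p̃_1 = p̃_2 = ⋯ = p̃_{m−1} = 1/(3(m−1)) and p̃_m = 2/3, where the i-th symbol (in increasing binary order) is assigned probability p̃_i. Then for every bit index j ∈ {1, …, d}, the marginal satisfies P(Y_j = 0) = m/(6(m−1)) (or its complement), and consequently Σ_{j=1}^d H_b(Y_j) − H(X) = d · h_b(m/(6(m−1))) + (1/3) log₂(1/(3(m−1))) + (2/3) log₂(2/3). -/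
open Finset

/-- The binary entropy function `h_b(x) = -x log₂ x - (1-x) log₂ (1-x)`
(with the convention `0 log₂ 0 = 0`, which `Real.logb` satisfies). -/
noncomputable def binEnt (x : ℝ) : ℝ :=
  -(x * Real.logb 2 x) - (1 - x) * Real.logb 2 (1 - x)

/-- For the probability vector `p̃` on `{0,1}^d` (symbols identified with
`Fin (2^d)` in increasing binary order, bit `j` of symbol `i` being `Nat.testBit i j`) with
`p̃_1 = ⋯ = p̃_{m-1} = 1/(3(m-1))` and `p̃_m = 2/3`, every marginal satisfies
`P(Y_j = 0) = m/(6(m-1))` (or its complement), and the sum of marginal bit entropies exceeds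
the joint entropy by exactly
`d·h_b(m/(6(m-1))) + (1/3)log₂(1/(3(m-1))) + (2/3)log₂(2/3)`. -/
theorem order_perm_worst_case_example (d : ℕ) (hd : 1 ≤ d)
    (m : ℕ) (hm : m = 2 ^ d)
    (p : Fin m → ℝ)
    (hp : ∀ i : Fin m, p i = if (i : ℕ) = m - 1 then 2 / 3 else 1 / (3 * ((m : ℝ) - 1)))
    (P0 : Fin d → ℝ)
    (hP0 : ∀ j : Fin d,
      P0 j = ∑ i ∈ Finset.univ.filter (fun i : Fin m => Nat.testBit (i : ℕ) (j : ℕ) = false), p i) :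
    (∀ j : Fin d,
        P0 j = (m : ℝ) / (6 * ((m : ℝ) - 1)) ∨ P0 j = 1 - (m : ℝ) / (6 * ((m : ℝ) - 1))) ∧
    (∑ j : Fin d, binEnt (P0 j)) - (-∑ i : Fin m, p i * Real.logb 2 (p i)) =
      (d : ℝ) * binEnt ((m : ℝ) / (6 * ((m : ℝ) - 1)))
        + (1 / 3) * Real.logb 2 (1 / (3 * ((m : ℝ) - 1)))
        + (2 / 3) * Real.logb 2 (2 / 3) := by
  have hm' : m = 2 * 2 ^ (d - 1) := by
    rw [hm]
    conv_lhs => rw [show d = (d - 1) + 1 by omega]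
    ring
  have hm2 : 2 ≤ m := by
    have : 1 ≤ 2 ^ (d - 1) := Nat.one_le_two_pow
    omega
  have hmR : (2 : ℝ) ≤ (m : ℝ) := by exact_mod_cast hm2
  have hm1 : (m : ℝ) - 1 ≠ 0 := by linarith
  set c : ℝ := 1 / (3 * ((m : ℝ) - 1)) with hc
  set q : ℝ := (m : ℝ) / (6 * ((m : ℝ) - 1)) with hq
  -- cardinality of the filtered set
  have hcard : ∀ j : Fin d,
      (Finset.univ.filter (fun i : Fin m => Nat.testBit (i : ℕ) (j : ℕ) = false)).card
        = 2 ^ (d - 1) := by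
    intro j
    have hj : (j : ℕ) < d := j.isLt
    have hxorlt : ∀ i : Fin m, (i : ℕ) ^^^ 2 ^ (j : ℕ) < m := by
      intro i
      have h1 : (i : ℕ) < 2 ^ d := hm ▸ i.isLt
      have := Nat.xor_lt_two_pow h1 (Nat.pow_lt_pow_right one_lt_two hj)
      omega
    have hbij :
        (Finset.univ.filter (fun i : Fin m => Nat.testBit (i : ℕ) (j : ℕ) = false)).card =
        (Finset.univ.filter (fun i : Fin m => ¬ (Nat.testBit (i : ℕ) (j : ℕ) = false))).card := by
      apply Finset.card_nbij' (fun i : Fin m => (⟨(i : ℕ) ^^^ 2 ^ (j : ℕ), hxorlt i⟩ : Fin m))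
        (fun i : Fin m => (⟨(i : ℕ) ^^^ 2 ^ (j : ℕ), hxorlt i⟩ : Fin m))
      · intro a ha
        simp only [coe_filter, Set.mem_setOf_eq, mem_filter, mem_univ, true_and] at ha ⊢
        simp [ha]
      · intro a ha
        simp only [coe_filter, Set.mem_setOf_eq, mem_filter, mem_univ, true_and] at ha ⊢
        simp only [Bool.not_eq_false] at ha
        simp [ha]
      · intro a ha
        ext
        simp [Nat.xor_xor_cancel_right]
      · intro a ha
        ext
        simp [Nat.xor_xor_cancel_right]
    have htot :
        (Finset.univ.filter (fun i : Fin m => Nat.testBit (i : ℕ) (j : ℕ) = false)).card +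
        (Finset.univ.filter (fun i : Fin m => ¬ (Nat.testBit (i : ℕ) (j : ℕ) = false))).card = m := by
      rw [Finset.card_filter_add_card_filter_not]
      simp
    omega
  -- potency casts
  have hpowR : ((2 : ℝ)) * (2 : ℝ) ^ (d - 1) = (m : ℝ) := by
    rw [hm']; push_cast; ring
  -- each marginal equals q
  have hP0q : ∀ j : Fin d, P0 j = q := by
    intro j
    rw [hP0 j]
    have hconst : ∀ i ∈ Finset.univ.filter
        (fun i : Fin m => Nat.testBit (i : ℕ) (j : ℕ) = false), p i = c := by
      intro i hi
      simp only [mem_filter, mem_univ, true_and] at hi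
      rw [hp i, if_neg]
      intro h
      rw [h, hm] at hi
      simp [Nat.testBit_two_pow_sub_one, j.isLt] at hi
    rw [Finset.sum_congr rfl hconst, Finset.sum_const, hcard j, nsmul_eq_mul, hc, hq]
    push_cast
    field_simp
    nlinarith [hpowR]
  -- joint entropy
  have hlastlt : m - 1 < m := by omega
  have hsum : ∑ i : Fin m, p i * Real.logb 2 (p i)
      = (1 / 3) * Real.logb 2 c + (2 / 3) * Real.logb 2 (2 / 3) := by
    have hmem : (⟨m - 1, hlastlt⟩ : Fin m) ∈ (Finset.univ : Finset (Fin m)) := mem_univ _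
    rw [← Finset.sum_erase_add _ _ hmem]
    have hconst : ∀ i ∈ (Finset.univ : Finset (Fin m)).erase ⟨m - 1, hlastlt⟩,
        p i * Real.logb 2 (p i) = c * Real.logb 2 c := by
      intro i hi
      have hne : i ≠ ⟨m - 1, hlastlt⟩ := (Finset.mem_erase.mp hi).1
      rw [hp i, if_neg]
      intro h
      exact hne (Fin.ext h)
    rw [Finset.sum_congr rfl hconst, Finset.sum_const, Finset.card_erase_of_mem hmem,
      Finset.card_univ, Fintype.card_fin, nsmul_eq_mul]
    have hplast : p ⟨m - 1, hlastlt⟩ = 2 / 3 := by rw [hp]; simp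
    rw [hplast]
    have hcast : ((m - 1 : ℕ) : ℝ) = (m : ℝ) - 1 := by
      have : 1 ≤ m := by omega
      push_cast [this]; ring
    have h13 : ((m : ℝ) - 1) * (1 / (3 * ((m : ℝ) - 1))) = 1 / 3 := by
      field_simp
    rw [hcast, hc, ← mul_assoc, h13]
  refine ⟨fun j => Or.inl (hP0q j), ?_⟩
  have hent : ∑ j : Fin d, binEnt (P0 j) = (d : ℝ) * binEnt q := by
    rw [Finset.sum_congr rfl (fun j _ => by rw [hP0q j]), Finset.sum_const, Finset.card_univ,
      Fintype.card_fin, nsmul_eq_mul]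
  rw [hent, hsum]
  ring
end

section
/- Let d ≥ 1, m = 2^d, and let p̃ be the probability vector with p̃_1 = ⋯ = p̃_{m−1} = 1/(3(m−1)) and p̃_m = 2/3 assigned to the symbols of {0,1}^d. Then for every bijection g : {0,1}^d → {0,1}^d, writing Y = g(X), one has Σ_{j=1}^d H_b(Y_j) ≥ d · h_b(m/(6(m−1))); that is, the assignment of symbols in increasing binary order to p̃ listed in ascending order minimizes the sum of marginal bit entropies over all bijections. -/
open Finset

/-!
Flipping bit `j` is a bijection between the symbols whose `j`-th bit is `0` and those whose
`j`-th bit is `1`, so whatever `g` is, `P(Y_j = 0)` sums the probabilities of exactly `m/2`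
symbols. That sum is `q = (m/2) · 1/(3(m-1)) = m/(6(m-1))` if the heavy symbol is not among
them and `1 - q` if it is; as `h_b(1 - x) = h_b(x)`, every bit contributes exactly `h_b(q)`,
and the inequality is in fact an equality.
-/

theorem binEnt_one_sub (x : ℝ) : binEnt (1 - x) = binEnt x := by
  unfold binEnt
  rw [sub_sub_cancel]
  ring

def Fin.flipBit {d : ℕ} (j : ℕ) (hj : j < d) : Equiv.Perm (Fin (2 ^ d)) :=
  Function.Involutive.toPerm
    (fun y => ⟨y ^^^ 2 ^ j, Nat.xor_lt_two_pow y.isLt (Nat.pow_lt_pow_right one_lt_two hj)⟩)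
    fun y => Fin.ext (by simp)

theorem Fin.testBit_flipBit {d j : ℕ} (hj : j < d) (y : Fin (2 ^ d)) :
    (Fin.flipBit j hj y : ℕ).testBit j = !(y : ℕ).testBit j := by
  change (y ^^^ 2 ^ j : ℕ).testBit j = _
  simp [Nat.testBit_xor]

theorem Fin.two_mul_card_testBit_eq_false {d j : ℕ} (hj : j < d) :
    2 * #{y : Fin (2 ^ d) | (y : ℕ).testBit j = false} = 2 ^ d := by
  have hflip : #{y : Fin (2 ^ d) | (y : ℕ).testBit j = false}
      = #{y : Fin (2 ^ d) | ¬(y : ℕ).testBit j = false} :=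
    card_nbij' (Fin.flipBit j hj) (Fin.flipBit j hj)
      (fun y => by simp [Fin.testBit_flipBit])
      (fun y => by simp [Fin.testBit_flipBit])
      (fun y _ => Function.Involutive.toPerm_involutive _ y)
      (fun y _ => Function.Involutive.toPerm_involutive _ y)
  rw [two_mul]
  nth_rw 2 [hflip]
  rw [card_filter_add_card_filter_not, card_univ, Fintype.card_fin]

theorem card_filter_comp_equiv {α β : Type*} [Fintype α] [Fintype β] (P : β → Prop)
    [DecidablePred P] (g : α ≃ β) : #{i | P (g i)} = #{y | P y} :=
  card_nbij' g g.symm (fun i => by simp) (fun y => by simp) (fun i _ => by simp)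
    (fun y _ => by simp)

theorem sum_ite_eq_card_mul_add {ι : Type*} [DecidableEq ι] (S : Finset ι) (a : ι) (u c : ℝ) :
    ∑ i ∈ S, (if i = a then u else c) = #S * c + if a ∈ S then u - c else 0 := by
  have : ∀ i, (if i = a then u else c) = c + if i = a then u - c else 0 := by
    intro i; split_ifs <;> ring
  simp only [this, sum_add_distrib, sum_const, sum_ite_eq', nsmul_eq_mul]

theorem binEnt_sum_of_two_mul_card_eq {n : ℕ} (a : Fin n) (S : Finset (Fin n))
    (hS : 2 * #S = n) :
    binEnt (∑ i ∈ S, if i = a then 2 / 3 else 1 / (3 * ((n : ℝ) - 1)))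
      = binEnt (n / (6 * ((n : ℝ) - 1))) := by
  have hn : (2 : ℝ) ≤ n := by
    have := a.pos
    exact_mod_cast (show 2 ≤ n by omega)
  have hS' : (#S : ℝ) = n / 2 := by
    rw [eq_div_iff two_ne_zero, mul_comm]; exact_mod_cast hS
  have hn1 : (n : ℝ) - 1 ≠ 0 := by linarith
  rw [sum_ite_eq_card_mul_add, hS']
  split_ifs
  · rw [← binEnt_one_sub]
    congr 1
    field_simp
    ring
  · congr 1
    field_simp
    ring

theorem order_perm_minimizes_on_example_general (d : ℕ)
    (m : ℕ) (hm : m = 2 ^ d)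
    (p : Fin m → ℝ)
    (hp : ∀ i : Fin m, p i = if (i : ℕ) = m - 1 then 2 / 3 else 1 / (3 * ((m : ℝ) - 1)))
    (g : Equiv.Perm (Fin m)) :
    ∑ j : Fin d,
        binEnt (∑ i ∈ Finset.univ.filter
          (fun i : Fin m => Nat.testBit ((g i : Fin m) : ℕ) (j : ℕ) = false), p i)
      ≥ (d : ℝ) * binEnt ((m : ℝ) / (6 * ((m : ℝ) - 1))) := by
  subst hm
  have hpos : 0 < 2 ^ d := Nat.two_pow_pos d
  have hp' : p = fun i =>
      if i = ⟨2 ^ d - 1, by omega⟩ then 2 / 3 else 1 / (3 * (((2 ^ d : ℕ) : ℝ) - 1)) := by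
    funext i; simp [hp, Fin.ext_iff]
  have hbit : ∀ j : Fin d, binEnt (∑ i ∈ univ.filter
        (fun i : Fin (2 ^ d) => Nat.testBit ((g i : Fin (2 ^ d)) : ℕ) (j : ℕ) = false), p i)
      = binEnt (((2 ^ d : ℕ) : ℝ) / (6 * (((2 ^ d : ℕ) : ℝ) - 1))) := by
    intro j
    rw [hp']
    apply binEnt_sum_of_two_mul_card_eq
    rw [card_filter_comp_equiv (fun y : Fin (2 ^ d) => (y : ℕ).testBit j = false) g]
    exact Fin.two_mul_card_testBit_eq_false j.isLt
  simp [hbit]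

/-- For the probability vector `p̃` with `m-1` entries `1/(3(m-1))` and one
entry `2/3` on the symbols of `{0,1}^d` (identified with `Fin (2^d)`, bit `j` of symbol `y`
being `Nat.testBit y j`), every bijection `g` of the alphabet satisfies
`Σ_j h_b(P(Y_j = 0)) ≥ d · h_b(m/(6(m-1)))`, where `Y = g(X)` and `P(Y_j = 0)` is the sum of
the probabilities of the symbols mapped by `g` to words whose `j`-th bit is `0`. -/
theorem order_perm_minimizes_on_example (d : ℕ) (hd : 1 ≤ d)
    (m : ℕ) (hm : m = 2 ^ d)
    (p : Fin m → ℝ)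
    (hp : ∀ i : Fin m, p i = if (i : ℕ) = m - 1 then 2 / 3 else 1 / (3 * ((m : ℝ) - 1)))
    (g : Equiv.Perm (Fin m)) :
    ∑ j : Fin d,
        binEnt (∑ i ∈ Finset.univ.filter
          (fun i : Fin m => Nat.testBit ((g i : Fin m) : ℕ) (j : ℕ) = false), p i)
      ≥ (d : ℝ) * binEnt ((m : ℝ) / (6 * ((m : ℝ) - 1))) :=
  order_perm_minimizes_on_example_general d m hm p hp g
end

section
/- For each d ≥ 1 let m = 2^d and define C(d) = d · h_b(m/(6(m−1))) − H(p̃^{(d)}), where p̃^{(d)} is the probability vector with m−1 entries equal to 1/(3(m−1)) and one entry equal to 2/3, and H(p̃^{(d)}) = (1/3) log₂(3(m−1)) + (2/3) log₂(3/2) is its entropy. Then lim_{d→∞} [ C(d) − d · (h_b(1/6) − 1/3) ] = −h_b(1/3). In particular, since h_b(1/6) − 1/3 > 0, the quantity C(d) grows linearly in d = log₂ m, so the worst-case gap between the minimal sum of marginal bit entropies over bijections and the joint entropy is Θ(log m). -/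
/-!
With `m = 2^d` and `x_d = m/(6(m-1)) = 1/6 + 1/(6(m-1))`, splitting
`log₂(3(m-1)) = log₂ 3 + d + log₂(1 - 1/m)` gives
`C(d) - d(h_b(1/6) - 1/3) = d(h_b(x_d) - h_b(1/6)) - (1/3) log₂(1 - 1/m) - h_b(1/3)`.
Since `h_b` is differentiable at `1/6`, `h_b(x_d) - h_b(1/6) = O(x_d - 1/6)`, and
`d (x_d - 1/6) = d/(6(m-1)) → 0`; so only `-h_b(1/3)` survives.
The inequality `h_b(1/6) > 1/3` is strict concavity of `h_b` on the chord from `0` to `1/2`.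
-/

open Filter

/-- `C(d) = d·h_b(m/(6(m-1))) - H(p̃^{(d)})` with `m = 2^d` and
`H(p̃^{(d)}) = (1/3)log₂(3(m-1)) + (2/3)log₂(3/2)`. -/
noncomputable def worstCaseGap (d : ℕ) : ℝ :=
  (d : ℝ) * binEnt ((2 ^ d : ℝ) / (6 * ((2 ^ d : ℝ) - 1)))
    - ((1 / 3) * Real.logb 2 (3 * ((2 ^ d : ℝ) - 1)) + (2 / 3) * Real.logb 2 (3 / 2))

open Real Topology Asymptotics

theorem DifferentiableAt.tendsto_smul_sub_of_tendsto_mul_sub {α 𝕜 F : Type*}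
    [NontriviallyNormedField 𝕜] [NormedAddCommGroup F] [NormedSpace 𝕜 F]
    {l : Filter α} {f : 𝕜 → F} {a : 𝕜} {c u : α → 𝕜} (hf : DifferentiableAt 𝕜 f a)
    (hu : Tendsto u l (𝓝 a)) (hcu : Tendsto (fun n => c n * (u n - a)) l (𝓝 0)) :
    Tendsto (fun n => c n • (f (u n) - f a)) l (𝓝 0) := by
  have hO : (fun n => f (u n) - f a) =O[l] fun n => u n - a :=
    hf.isBigO_sub.comp_tendsto hu
  exact ((isBigO_refl c l).smul hO).trans_tendsto (by simpa only [smul_eq_mul] using hcu)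

theorem binEnt_eq_binEntropy_div (x : ℝ) : binEnt x = binEntropy x / log 2 := by
  simp only [binEnt, binEntropy, logb, log_inv]
  ring

theorem differentiableAt_binEnt {x : ℝ} (h₀ : x ≠ 0) (h₁ : x ≠ 1) :
    DifferentiableAt ℝ binEnt x := by
  simpa only [funext binEnt_eq_binEntropy_div] using
    (differentiableAt_binEntropy h₀ h₁).div_const (log 2)

theorem two_mul_lt_binEnt {x : ℝ} (h₀ : 0 < x) (h₁ : x < 1 / 2) : 2 * x < binEnt x := by
  have h := strictConcave_binEntropy.2 (show (0 : ℝ) ∈ Set.Icc 0 1 by norm_num)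
    (show (2⁻¹ : ℝ) ∈ Set.Icc 0 1 by norm_num) (by norm_num)
    (show 0 < 1 - 2 * x by linarith) (show 0 < 2 * x by linarith) (by ring)
  have hx : (1 - 2 * x) • (0 : ℝ) + (2 * x) • (2⁻¹ : ℝ) = x := by simp only [smul_eq_mul]; ring
  rw [hx, binEntropy_zero, binEntropy_two_inv, smul_eq_mul, smul_eq_mul] at h
  rw [binEnt_eq_binEntropy_div, lt_div_iff₀ (log_pos one_lt_two)]
  linarith

theorem binEnt_one_third : binEnt (1 / 3) = logb 2 3 - 2 / 3 := by
  have h : logb 2 (2 / 3) = 1 - logb 2 3 := by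
    rw [logb_div two_ne_zero three_ne_zero, logb_self_eq_one one_lt_two]
  rw [binEnt, one_div, logb_inv, show (1 : ℝ) - 3⁻¹ = 2 / 3 by norm_num, h]
  ring

theorem worstCaseGap_sub_eq {d : ℕ} (hd : 1 ≤ d) :
    worstCaseGap d - d * (binEnt (1 / 6) - 1 / 3) =
      d * (binEnt ((2 ^ d : ℝ) / (6 * ((2 ^ d : ℝ) - 1))) - binEnt (1 / 6))
        - 1 / 3 * logb 2 (1 - ((2 : ℝ) ^ d)⁻¹) - binEnt (1 / 3) := by
  have hm : (2 : ℝ) ≤ 2 ^ d := le_self_pow₀ one_le_two (by omega)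
  have hsplit : 3 * ((2 : ℝ) ^ d - 1) = 3 * (2 ^ d * (1 - ((2 : ℝ) ^ d)⁻¹)) := by
    field_simp
  have hlog : logb 2 (3 * ((2 : ℝ) ^ d - 1)) = logb 2 3 + d + logb 2 (1 - ((2 : ℝ) ^ d)⁻¹) := by
    have : 0 < 1 - ((2 : ℝ) ^ d)⁻¹ := sub_pos.2 (inv_lt_one_of_one_lt₀ (by linarith))
    rw [hsplit, logb_mul three_ne_zero (by positivity), logb_mul (by positivity) this.ne',
      logb_pow, logb_self_eq_one one_lt_two]
    ring
  rw [worstCaseGap, hlog, logb_div three_ne_zero two_ne_zero, logb_self_eq_one one_lt_two,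
    binEnt_one_third]
  ring

theorem two_pow_div_six_mul_sub_one_sub_one_sixth {d : ℕ} (hd : 1 ≤ d) :
    (2 ^ d : ℝ) / (6 * (2 ^ d - 1)) - 1 / 6 = (6 * (2 ^ d - 1))⁻¹ := by
  have hm : (2 : ℝ) ≤ 2 ^ d := le_self_pow₀ one_le_two (by omega)
  have : (2 : ℝ) ^ d - 1 ≠ 0 := by linarith
  field_simp
  ring

theorem tendsto_natCast_div_two_pow_sub_one :
    Tendsto (fun d : ℕ => (d : ℝ) / (2 ^ d - 1)) atTop (𝓝 0) := by
  have h := (tendsto_pow_const_div_const_pow_of_one_lt 1 one_lt_two).const_mul 2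
  rw [mul_zero] at h
  have hm : ∀ᶠ d : ℕ in atTop, (2 : ℝ) ≤ 2 ^ d :=
    (eventually_ge_atTop 1).mono fun d hd => le_self_pow₀ one_le_two (by omega)
  refine squeeze_zero' ?_ ?_ h
  · filter_upwards [hm] with d hm
    exact div_nonneg d.cast_nonneg (by linarith)
  · filter_upwards [hm] with d hm
    rw [pow_one, ← mul_div_assoc, div_le_div_iff₀ (by linarith) (by positivity)]
    nlinarith [d.cast_nonneg (α := ℝ)]

theorem tendsto_logb_one_sub_inv_two_pow :
    Tendsto (fun d : ℕ => logb 2 (1 - ((2 : ℝ) ^ d)⁻¹)) atTop (𝓝 0) := by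
  have h : Tendsto (fun d : ℕ => 1 - ((2 : ℝ) ^ d)⁻¹) atTop (𝓝 1) := by
    simpa using (tendsto_inv_atTop_zero.comp
      (tendsto_pow_atTop_atTop_of_one_lt (one_lt_two (α := ℝ)))).const_sub (1 : ℝ)
  simpa [Function.comp_def] using (continuousAt_logb one_ne_zero).tendsto.comp h

/-- `C(d) - d·(h_b(1/6) - 1/3) → -h_b(1/3)` as `d → ∞`, and
`h_b(1/6) - 1/3 > 0`, so the worst-case gap `C(d)` grows linearly in `d = log₂ m`. -/
theorem worstCaseGap_asymptotics :
    Tendsto (fun d : ℕ => worstCaseGap d - (d : ℝ) * (binEnt (1 / 6) - 1 / 3))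
        atTop (nhds (-binEnt (1 / 3)))
      ∧ 0 < binEnt (1 / 6) - 1 / 3 := by
  refine ⟨?_, by linarith [two_mul_lt_binEnt (x := 1 / 6) (by norm_num) (by norm_num)]⟩
  have hx : ∀ᶠ d : ℕ in atTop,
      (2 ^ d : ℝ) / (6 * (2 ^ d - 1)) - 1 / 6 = (6 * (2 ^ d - 1))⁻¹ := by
    filter_upwards [eventually_ge_atTop 1] with d hd
    exact two_pow_div_six_mul_sub_one_sub_one_sixth hd
  have hu : Tendsto (fun d : ℕ => (2 ^ d : ℝ) / (6 * (2 ^ d - 1))) atTop (𝓝 (1 / 6)) := by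
    refine tendsto_sub_nhds_zero_iff.1 (Tendsto.congr' (EventuallyEq.symm hx) ?_)
    exact tendsto_inv_atTop_zero.comp <| Tendsto.const_mul_atTop (by norm_num) <|
      tendsto_atTop_add_const_right _ (-1) (tendsto_pow_atTop_atTop_of_one_lt one_lt_two)
  have hcu : Tendsto (fun d : ℕ => (d : ℝ) * ((2 ^ d : ℝ) / (6 * (2 ^ d - 1)) - 1 / 6))
      atTop (𝓝 0) := by
    have h := tendsto_natCast_div_two_pow_sub_one.div_const 6
    rw [zero_div] at h
    refine h.congr' ?_
    filter_upwards [hx] with d hd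
    rw [hd, mul_inv]
    ring
  have hmain := (differentiableAt_binEnt (x := 1 / 6) (by norm_num)
    (by norm_num)).tendsto_smul_sub_of_tendsto_mul_sub hu hcu
  have h := (hmain.sub (tendsto_logb_one_sub_inv_two_pow.const_mul (1 / 3))).sub_const
    (binEnt (1 / 3))
  rw [mul_zero, sub_zero, zero_sub] at h
  refine h.congr' ?_
  filter_upwards [eventually_ge_atTop 1] with d hd
  rw [worstCaseGap_sub_eq hd, smul_eq_mul]
end
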